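/- arXiv:1905.01747 — 2 statements merged into one kernel-verified Lean document; each statement's English description precedes it below -/
import Mathlib

section
/- Let P_min, P_max, P_SD1, p, nur, δ be real numbers, and let x ∈ {0,1} and z ∈ {0,1}. If the constraints p − P_SD1·x = nur + δ + P_SD1, (P_min − P_SD1)·z ≤ nur ≤ (P_max − P_SD1)·z, and 0 ≤ δ + P_SD1 ≤ P_max·(1 − z) all hold, then nur = z·(p − P_SD1·x). In particular, if the unit is online (x = 1) and scheduled to shut down (z = 1), its negative upward ramping contribution equals p − P_SD1, the drop from its current output to the first point of its shutdown trajectory; and if z = 0 the contribution is 0. -/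
theorem stmt_4 (Pmin Pmax PSD1 p nur δ x z : ℝ)
    (hx : x ∈ ({0, 1} : Set ℝ))
    (hz : z ∈ ({0, 1} : Set ℝ))
    (h1 : p - PSD1 * x = nur + δ + PSD1)
    (h2 : (Pmin - PSD1) * z ≤ nur) (h3 : nur ≤ (Pmax - PSD1) * z)
    (h4 : 0 ≤ δ + PSD1) (h5 : δ + PSD1 ≤ Pmax * (1 - z)) :
    nur = z * (p - PSD1 * x) := by
  rcases hz with rfl | rfl
  · simp only [mul_zero, zero_mul] at *
    linarith
  · have : δ + PSD1 = 0 := by nlinarith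
    nlinarith
end

section
/- Let G be a finite index set of generators, and for each g ∈ G let P_min(g), P_max(g), p(g), ur(g), nur(g), δ(g) be real numbers and z(g) ∈ {0,1}, such that for every g the constraints p(g) = nur(g) + δ(g), P_min(g)·z(g) ≤ nur(g) ≤ P_max(g)·z(g), and 0 ≤ δ(g) ≤ P_max(g)·(1 − z(g)) hold. Let UFRC be a real number. Then the reformulated upward ramping requirement Σ_{g∈G} ur(g) − Σ_{g∈G} nur(g) ≥ UFRC holds if and only if Σ_{g∈G} ur(g) − Σ_{g∈G} z(g)·p(g) ≥ UFRC; that is, the deliverable upward ramping capability is the scheduled upward ramping minus the total current output of all units scheduled to shut down. -/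
theorem stmt_7 {G : Type*} [Fintype G]
    (Pmin Pmax p ur nur δ z : G → ℝ)
    (hz : ∀ g, z g ∈ ({0, 1} : Set ℝ))
    (h1 : ∀ g, p g = nur g + δ g)
    (h2 : ∀ g, Pmin g * z g ≤ nur g) (h3 : ∀ g, nur g ≤ Pmax g * z g)
    (h4 : ∀ g, 0 ≤ δ g) (h5 : ∀ g, δ g ≤ Pmax g * (1 - z g))
    (UFRC : ℝ) :
    (∑ g, ur g) - (∑ g, nur g) ≥ UFRC ↔
      (∑ g, ur g) - (∑ g, z g * p g) ≥ UFRC := by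
  have key : ∀ g, nur g = z g * p g := by
    intro g
    rcases hz g with h | h
    · have h2' := h2 g; have h3' := h3 g
      rw [h] at h2' h3' ⊢
      simp at h2' h3' ⊢
      linarith
    · have h5' := h5 g
      rw [h] at h5' ⊢
      have : δ g = 0 := by have := h4 g; simp at h5'; linarith
      rw [h1 g, this]; ring
  rw [Finset.sum_congr rfl (fun g _ => key g)]
end
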